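/- arXiv:1204.1086 — 2 statements merged into one kernel-verified Lean document; each statement's English description precedes it below -/
import Mathlib

section
/- Let s ≥ 2 and let γ : ℕ → ℕ be a nondecreasing function such that λ_{s−1}(n) ≤ γ(n)·n for all n ≥ 1. Then for all n ≥ 1: λ_s(n) ≤ γ(n)·λ_s(n, n). -/
/-- Alternating list `a b a b ⋯` of the given length. -/
def altList : ℕ → ℕ → ℕ → List ℕ
  | 0, _, _ => []
  | (k+1), a, b => a :: altList k b a

/-- An order-`s` Davenport–Schinzel sequence: it contains no (not necessarily
contiguous) subsequence `a b a b ⋯` of length `s+2` over two distinct symbols. -/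
def IsDS (s : ℕ) (S : List ℕ) : Prop :=
  ∀ a b : ℕ, a ≠ b → ¬ (altList (s + 2) a b).Sublist S

/-- 2-sparse: no two equal adjacent symbols. -/
def Sparse2 (S : List ℕ) : Prop := S.Chain' (· ≠ ·)

/-- `S` can be partitioned into at most `m` blocks
(contiguous runs of pairwise distinct symbols). -/
def Blocked (m : ℕ) (S : List ℕ) : Prop :=
  ∃ Bs : List (List ℕ), Bs.length ≤ m ∧ (∀ B ∈ Bs, B.Nodup) ∧ S = Bs.flatten

/-- `λ_s(n)`: maximum length of a 2-sparse order-`s` DS sequence over an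
alphabet of `n` symbols. -/
noncomputable def lamS (s n : ℕ) : ℕ :=
  sSup {l : ℕ | ∃ S : List ℕ, IsDS s S ∧ Sparse2 S ∧ S.toFinset.card ≤ n ∧ S.length = l}

/-- `λ_s(n,m)`: maximum length of an order-`s` DS sequence over an alphabet of
`n` symbols that can be partitioned into at most `m` blocks. -/
noncomputable def lamB (s n m : ℕ) : ℕ :=
  sSup {l : ℕ | ∃ S : List ℕ, IsDS s S ∧ S.toFinset.card ≤ n ∧ Blocked m S ∧ S.length = l}

/-!
Cut a 2-sparse order-`s` DS sequence greedily into intervals, each ending at the last occurrence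
of one of its symbols; the final symbols are distinct, so there are at most `n` intervals. Each
interval is an order-`(s-1)` DS sequence: an alternation of length `s+1` inside it could be
continued by its next letter, which occurs after the interval unless it is the interval's final
symbol. Hence an interval on `k ≤ n` symbols has length at most `γ(k)·k ≤ γ(n)·k`. Deleting the
repetitions inside every interval shortens the sequence by a factor at most `γ(n)` and leaves a
sublist made of at most `n` blocks, whose length is at most `λ_s(n, n)`.

By induction on `s` the same decomposition gives `λ_s(n) ≤ n^s`; some bound is needed because
`sSup` of an unbounded set of naturals is `0`.
-/

namespace List

variable {α : Type*}

theorem flatten_map_sublist {f : List α → List α} (hf : ∀ l, f l <+ l) :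
    ∀ Ls : List (List α), (Ls.map f).flatten <+ Ls.flatten
  | [] => Sublist.slnil
  | l :: Ls => (hf l).append (flatten_map_sublist hf Ls)

theorem length_flatten_le_mul {f : List α → List α} {c : ℕ} {Ls : List (List α)}
    (h : ∀ l ∈ Ls, l.length ≤ c * (f l).length) :
    Ls.flatten.length ≤ c * (Ls.map f).flatten.length := by
  simp only [length_flatten, map_map, ← sum_map_mul_left]
  exact sum_le_sum h

variable [DecidableEq α]

theorem card_toFinset_le_of_subset {l₁ l₂ : List α} (h : l₁ ⊆ l₂) :
    l₁.toFinset.card ≤ l₂.toFinset.card :=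
  Finset.card_le_card fun _ hx => mem_toFinset.2 (h (mem_toFinset.1 hx))

theorem Nodup.length_le_card_toFinset {l₁ l₂ : List α} (hl₁ : l₁.Nodup) (h : l₁ ⊆ l₂) :
    l₁.length ≤ l₂.toFinset.card :=
  toFinset_card_of_nodup hl₁ ▸ card_toFinset_le_of_subset h

/-- The shortest nonempty prefix ending at the last occurrence of a symbol. -/
def firstInterval : List α → List α
  | [] => []
  | x :: l => if x ∈ l then x :: firstInterval l else [x]

def afterFirstInterval : List α → List α
  | [] => []
  | x :: l => if x ∈ l then afterFirstInterval l else l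

theorem firstInterval_append_afterFirstInterval :
    ∀ l : List α, firstInterval l ++ afterFirstInterval l = l
  | [] => rfl
  | x :: l => by
    by_cases hx : x ∈ l <;>
      simp [firstInterval, afterFirstInterval, hx, firstInterval_append_afterFirstInterval l]

theorem firstInterval_sublist (l : List α) : firstInterval l <+ l := by
  conv_rhs => rw [← firstInterval_append_afterFirstInterval l]
  exact sublist_append_left _ _

theorem afterFirstInterval_suffix (l : List α) : afterFirstInterval l <:+ l :=
  ⟨_, firstInterval_append_afterFirstInterval l⟩

theorem firstInterval_ne_nil : ∀ {l : List α}, l ≠ [] → firstInterval l ≠ []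
  | x :: l, _ => by by_cases hx : x ∈ l <;> simp [firstInterval, hx]

theorem length_afterFirstInterval_lt {l : List α} (hl : l ≠ []) :
    (afterFirstInterval l).length < l.length := by
  have h := congrArg length (firstInterval_append_afterFirstInterval l)
  rw [length_append] at h
  have := length_pos_iff.2 (firstInterval_ne_nil hl)
  omega

theorem exists_firstInterval_eq_concat : ∀ {l : List α}, l ≠ [] →
    ∃ l' z, firstInterval l = l' ++ [z] ∧ z ∉ afterFirstInterval l ∧
      ∀ y ∈ firstInterval l, y ∉ afterFirstInterval l → y = z
  | x :: l, _ => by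
    by_cases hx : x ∈ l
    · obtain ⟨l', z, hl', hz, hlast⟩ := exists_firstInterval_eq_concat (ne_nil_of_mem hx)
      simp only [firstInterval, afterFirstInterval, hx, if_true]
      refine ⟨x :: l', z, by simp [hl'], hz, fun y hy hyB => ?_⟩
      rcases mem_cons.1 hy with rfl | hy
      · rw [← firstInterval_append_afterFirstInterval l, mem_append] at hx
        exact hlast y (hx.resolve_right hyB) hyB
      · exact hlast y hy hyB
    · simp only [firstInterval, afterFirstInterval, hx, if_false]
      exact ⟨[], x, rfl, hx, fun y hy _ => mem_singleton.1 hy⟩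

theorem card_toFinset_afterFirstInterval_lt {l : List α} (hl : l ≠ []) :
    (afterFirstInterval l).toFinset.card < l.toFinset.card := by
  obtain ⟨l', z, hl', hz, -⟩ := exists_firstInterval_eq_concat hl
  have hzl : z ∈ l := (firstInterval_sublist l).subset (by simp [hl'])
  refine Finset.card_lt_card ⟨fun x hx => ?_, fun h => hz (by simpa using h (mem_toFinset.2 hzl))⟩
  exact mem_toFinset.2 ((afterFirstInterval_suffix l).subset (mem_toFinset.1 hx))

end List

open List

theorem IsDS.sublist {s : ℕ} {S T : List ℕ} (h : IsDS s S) (hTS : T <+ S) : IsDS s T :=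
  fun a b hab hsub => h a b hab (hsub.trans hTS)

theorem isDS_nil (s : ℕ) : IsDS s [] :=
  fun _ _ _ h => cons_ne_nil _ _ (sublist_nil.1 h)

theorem exists_altList_eq_append {a b : ℕ} (hab : a ≠ b) : ∀ k : ℕ,
    ∃ P p q, p ≠ q ∧ q ∈ P ∧ altList (k + 2) a b = P ++ [p] ∧ altList (k + 3) a b = P ++ [p, q]
  | 0 => ⟨[a], b, a, hab.symm, mem_singleton_self a, rfl, rfl⟩
  | k + 1 => by
    obtain ⟨P, p, q, hpq, hqP, h₂, h₃⟩ := exists_altList_eq_append hab.symm k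
    exact ⟨a :: P, p, q, hpq, mem_cons_of_mem a hqP,
      by rw [altList, h₂, cons_append], by rw [altList, h₃, cons_append]⟩

theorem isDS_firstInterval {u : ℕ} {S : List ℕ} (hS : S ≠ []) (hDS : IsDS (u + 1) S) :
    IsDS u (firstInterval S) := by
  intro a b hab halt
  obtain ⟨P, p, q, hpq, hqP, h₂, h₃⟩ := exists_altList_eq_append hab u
  obtain ⟨A, z, hA, hz, hlast⟩ := exists_firstInterval_eq_concat hS
  have hsplit := firstInterval_append_afterFirstInterval S
  rw [h₂] at halt
  apply hDS a b hab
  rw [h₃, ← hsplit, ← singleton_append, ← append_assoc]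
  by_cases hqB : q ∈ afterFirstInterval S
  · exact halt.append (singleton_sublist.2 hqB)
  · -- then `q` is the final symbol `z`, and the alternation, ending in `p ≠ q`, fits before it
    obtain rfl : q = z := hlast q (halt.subset (by simp [hqP])) hqB
    rw [hA] at halt
    obtain ⟨l₁, l₂, heq, h₁, hl₂⟩ := sublist_append_iff.1 halt
    rcases sublist_singleton.1 hl₂ with rfl | rfl
    · rw [append_nil] at heq
      rw [heq, hA]
      exact (h₁.append (Sublist.refl [q])).trans (sublist_append_left _ _)
    · exact absurd (singleton_inj.1 (append_inj' heq rfl).2) hpq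

theorem IsDS.exists_intervals {u : ℕ} (S : List ℕ) (hDS : IsDS (u + 1) S) (hS : Sparse2 S) :
    ∃ Is : List (List ℕ), Is.flatten = S ∧ Is.length ≤ S.toFinset.card ∧
      ∀ I ∈ Is, I ≠ [] ∧ Sparse2 I ∧ IsDS u I := by
  rcases eq_or_ne S [] with rfl | hne
  · exact ⟨[], rfl, by simp, by simp⟩
  obtain ⟨Is, hflat, hlen, hIs⟩ := exists_intervals (afterFirstInterval S)
    (hDS.sublist (afterFirstInterval_suffix S).sublist) (hS.suffix (afterFirstInterval_suffix S))
  refine ⟨firstInterval S :: Is, by rw [flatten_cons, hflat, firstInterval_append_afterFirstInterval],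
    ?_, ?_⟩
  · have := card_toFinset_afterFirstInterval_lt hne
    rw [length_cons]
    omega
  · rintro I (_ | ⟨_, hI⟩)
    · exact ⟨firstInterval_ne_nil hne, hS.prefix ⟨_, firstInterval_append_afterFirstInterval S⟩,
        isDS_firstInterval hne hDS⟩
    · exact hIs I hI
termination_by S.length
decreasing_by exact length_afterFirstInterval_lt hne

theorem IsDS.length_le_card_pow : ∀ {t : ℕ} {S : List ℕ}, IsDS t S → Sparse2 S →
    S.length ≤ S.toFinset.card ^ t
  | 0, [], _, _ | 0, [_], _, _ => by simp
  | 0, x :: y :: _, hDS, hS => absurd (by simp [altList]) (hDS x y (isChain_cons_cons.1 hS).1)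
  | t + 1, S, hDS, hS => by
    obtain ⟨Is, rfl, hlen, hIs⟩ := hDS.exists_intervals S hS
    calc Is.flatten.length = (Is.map length).sum := length_flatten
      _ ≤ (Is.map length).length • Is.flatten.toFinset.card ^ t := by
        refine sum_le_card_nsmul (Is.map length) _ fun k hk => ?_
        obtain ⟨I, hI, rfl⟩ := mem_map.1 hk
        obtain ⟨-, hIS, hIDS⟩ := hIs I hI
        exact (hIDS.length_le_card_pow hIS).trans (Nat.pow_le_pow_left
          (card_toFinset_le_of_subset (sublist_flatten_of_mem hI).subset) t)
      _ ≤ Is.flatten.toFinset.card ^ (t + 1) := by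
        rw [length_map, smul_eq_mul, pow_succ']
        exact Nat.mul_le_mul_right _ hlen

theorem lamS_bddAbove (t n : ℕ) :
    BddAbove {l : ℕ | ∃ S : List ℕ, IsDS t S ∧ Sparse2 S ∧ S.toFinset.card ≤ n ∧ S.length = l} := by
  refine ⟨n ^ t, ?_⟩
  rintro _ ⟨S, hDS, hS, hcard, rfl⟩
  exact (hDS.length_le_card_pow hS).trans (Nat.pow_le_pow_left hcard t)

theorem length_le_lamS {t n : ℕ} {S : List ℕ} (hDS : IsDS t S) (hS : Sparse2 S)
    (hcard : S.toFinset.card ≤ n) : S.length ≤ lamS t n :=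
  le_csSup (lamS_bddAbove t n) ⟨S, hDS, hS, hcard, rfl⟩

theorem lamS_le {t n c : ℕ}
    (h : ∀ S : List ℕ, IsDS t S → Sparse2 S → S.toFinset.card ≤ n → S.length ≤ c) :
    lamS t n ≤ c :=
  csSup_le ⟨0, [], isDS_nil t, isChain_nil, by simp, rfl⟩ fun _ ⟨S, hDS, hS, hcard, hl⟩ =>
    hl ▸ h S hDS hS hcard

theorem Blocked.length_le {m n : ℕ} {S : List ℕ} (hB : Blocked m S) (hcard : S.toFinset.card ≤ n) :
    S.length ≤ m * n := by
  obtain ⟨Bs, hlen, hnodup, rfl⟩ := hB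
  calc Bs.flatten.length = (Bs.map length).sum := length_flatten
    _ ≤ (Bs.map length).length • n := by
      refine sum_le_card_nsmul (Bs.map length) _ fun k hk => ?_
      obtain ⟨B, hB, rfl⟩ := mem_map.1 hk
      exact ((hnodup B hB).length_le_card_toFinset (sublist_flatten_of_mem hB).subset).trans hcard
    _ ≤ m * n := by
      rw [length_map, smul_eq_mul]
      exact Nat.mul_le_mul_right n hlen

theorem length_le_lamB {s n m : ℕ} {S : List ℕ} (hDS : IsDS s S) (hcard : S.toFinset.card ≤ n)
    (hB : Blocked m S) : S.length ≤ lamB s n m :=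
  le_csSup ⟨m * n, fun _ ⟨_, _, hcard, hB, hl⟩ => hl ▸ hB.length_le hcard⟩ ⟨S, hDS, hcard, hB, rfl⟩

/-- For `s ≥ 2` and nondecreasing `γ` with `λ_{s−1}(n) ≤ γ(n)·n` for all `n ≥ 1`,
we have `λ_s(n) ≤ γ(n)·λ_s(n, n)` for all `n ≥ 1`. -/
theorem stmt6 (s : ℕ) (hs : 2 ≤ s) (γ : ℕ → ℕ) (hγ : Monotone γ)
    (h : ∀ n : ℕ, 1 ≤ n → lamS (s - 1) n ≤ γ n * n) :
    ∀ n : ℕ, 1 ≤ n → lamS s n ≤ γ n * lamB s n n := by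
  intro n _
  obtain ⟨u, rfl⟩ : ∃ u, s = u + 1 := ⟨s - 1, by omega⟩
  refine lamS_le fun S hDS hS hcard => ?_
  obtain ⟨Is, rfl, hlen, hIs⟩ := hDS.exists_intervals S hS
  have hdedup := flatten_map_sublist dedup_sublist Is
  have hinterval : ∀ I ∈ Is, I.length ≤ γ n * I.dedup.length := by
    intro I hI
    obtain ⟨hne, hIS, hIDS⟩ := hIs I hI
    have hk : I.toFinset.card ≤ n :=
      (card_toFinset_le_of_subset (sublist_flatten_of_mem hI).subset).trans hcard
    have hk₁ : 1 ≤ I.toFinset.card := Finset.card_pos.2 (toFinset_nonempty_iff I |>.2 hne)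
    calc I.length ≤ lamS u I.toFinset.card := length_le_lamS hIDS hIS le_rfl
      _ ≤ γ I.toFinset.card * I.toFinset.card := h _ hk₁
      _ ≤ γ n * I.dedup.length := card_toFinset I ▸ Nat.mul_le_mul_right _ (hγ hk)
  have hblocked : Blocked n (Is.map dedup).flatten :=
    ⟨_, (length_map _).trans_le (hlen.trans hcard), by simp [nodup_dedup], rfl⟩
  calc Is.flatten.length ≤ γ n * (Is.map dedup).flatten.length := length_flatten_le_mul hinterval
    _ ≤ γ n * lamB (u + 1) n n := Nat.mul_le_mul_left _ <| length_le_lamB (hDS.sublist hdedup)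
        ((card_toFinset_le_of_subset hdedup.subset).trans hcard) hblocked
end

section
/- For every c ≥ 1, every i ≥ 1, every j ≥ 1, every n ≥ 1, and every m with 1 ≤ m ≤ (a_{i,j})^c: λ_3(n,m) ≤ (2i+2)·n + (3i−2)·c·j·(m−1). -/
/-- Ackermann-type function `a_{i,j}` (junk values when an index is 0):
`a_{1,j} = 2^j`, `a_{i,1} = 2` for `i ≥ 2`, and `a_{i,j} = w·a_{i−1,w}` with
`w = a_{i,j−1}` for `i,j ≥ 2`. -/
def ackDS : ℕ → ℕ → ℕ
  | 0, _ => 0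
  | 1, j => 2 ^ j
  | _+2, 0 => 0
  | _+2, 1 => 2
  | i+2, j+2 => ackDS (i+2) (j+1) * ackDS (i+1) (ackDS (i+2) (j+1))
  termination_by i j => (i, j)

/-- Two-argument inverse Ackermann:
`α(n,m) = min{ i ≥ 1 : a_{i,j} ≥ m, where j = max(⌈n/m⌉, 3) }`. -/
noncomputable def alphaDS (n m : ℕ) : ℕ :=
  sInf {i : ℕ | 1 ≤ i ∧ m ≤ ackDS i (max ((n + m - 1) / m) 3)}

/-- One-argument inverse Ackermann `α(n) = α(n,n)`. -/
noncomputable def alphaD (n : ℕ) : ℕ := alphaDS n n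

/-!
For `m ≤ 2^t` (the case `i = 1`) split the blocks into two halves: symbols of only one half are
handled by induction on `t`, and a symbol shared by both halves cannot take part in an `abab`
inside either half, whence `λ₃(n, m) ≤ 4n + t(m - 1)`.

For `i ≥ 2` induct on `j`. With `w = a_{i,j-1}`, cut the `m ≤ (w · a_{i-1,w})^c` blocks into
intervals of `w^c` blocks. Symbols local to one interval are bounded by the induction on `j`.
Every other symbol is represented, in each interval where it occurs, by a single occurrence in a
contracted sequence of at most `a_{i-1,w}^c` blocks, which the induction on `i` bounds. Inside an
interval the symbols starting there, ending there, or passing through avoid `abab`, `abab` and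
`aba` respectively, so they cost at most `2` per symbol and `3` per block beyond the contracted
sequence.
-/

open List Finset

lemma pair_sublist_or_pair_sublist {α : Type*} {a b : α} {l : List α} (ha : a ∈ l) (hb : b ∈ l)
    (hab : a ≠ b) : [a, b] <+ l ∨ [b, a] <+ l := by
  obtain ⟨s, t, rfl⟩ := List.append_of_mem ha
  rcases List.mem_append.1 hb with hb | hb
  · exact Or.inr ((singleton_sublist.2 hb).append (by simp))
  · rcases List.mem_cons.1 hb with rfl | hb
    · exact absurd rfl hab
    · exact Or.inl (sublist_append_of_sublist_right ((singleton_sublist.2 hb).cons_cons a))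

lemma card_le_one_of_forall_not_pair_sublist {α : Type*} {s : Finset α} {l : List α}
    (hs : ∀ x ∈ s, x ∈ l) (h : ∀ a ∈ s, ∀ b ∈ s, a ≠ b → ¬ [a, b] <+ l) : #s ≤ 1 := by
  refine Finset.card_le_one.2 fun a ha b hb => ?_
  by_contra hab
  rcases pair_sublist_or_pair_sublist (hs a ha) (hs b hb) hab with hl | hl
  · exact h a ha b hb hab hl
  · exact h b hb a ha (Ne.symm hab) hl

lemma card_add_card_le_of_disjoint {α : Type*} [DecidableEq α] {s t u : Finset α}
    (hst : Disjoint s t) (hs : s ⊆ u) (ht : t ⊆ u) : #s + #t ≤ #u := by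
  rw [← card_union_of_disjoint hst]
  exact card_le_card (union_subset hs ht)

lemma altList_succ_eq_append (k a b : ℕ) :
    ∃ x, (x = a ∨ x = b) ∧ altList (k + 1) a b = altList k a b ++ [x] := by
  induction k generalizing a b with
  | zero => exact ⟨a, Or.inl rfl, rfl⟩
  | succ k ih =>
    obtain ⟨x, hx, he⟩ := ih b a
    exact ⟨x, hx.symm, by rw [altList, he]; rfl⟩

namespace IsDS

variable {s : ℕ} {S T U : List ℕ}

lemma sublist_s11 (h : IsDS s S) (hT : T <+ S) : IsDS s T :=
  fun a b hab hsub => h a b hab (hsub.trans hT)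

lemma filter_of_append_left {P : ℕ → Bool} (h : IsDS (s + 1) (T ++ S))
    (hP : ∀ x ∈ S, P x → x ∈ T) : IsDS s (S.filter P) := by
  intro a b hab hsub
  have hb : b ∈ S.filter P := hsub.subset (by simp [altList])
  rw [List.mem_filter] at hb
  exact h b a hab.symm ((singleton_sublist.2 (hP b hb.1 hb.2)).append
    (hsub.trans filter_sublist))

lemma filter_of_append_right {P : ℕ → Bool} (h : IsDS (s + 1) (S ++ T))
    (hP : ∀ x ∈ S, P x → x ∈ T) : IsDS s (S.filter P) := by
  intro a b hab hsub
  obtain ⟨x, hx, he⟩ := altList_succ_eq_append (s + 2) a b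
  have hxS : x ∈ S.filter P := hsub.subset (by rcases hx with rfl | rfl <;> simp [altList])
  rw [List.mem_filter] at hxS
  refine h a b hab ?_
  rw [he]
  exact (hsub.trans filter_sublist).append (singleton_sublist.2 (hP x hxS.1 hxS.2))

lemma filter_of_append_append {P : ℕ → Bool} (h : IsDS (s + 2) (T ++ S ++ U))
    (hP : ∀ x ∈ S, P x → x ∈ T ∧ x ∈ U) : IsDS s (S.filter P) := by
  intro a b hab hsub
  obtain ⟨x, hx, he⟩ := altList_succ_eq_append (s + 2) a b
  have hxS : x ∈ S.filter P := hsub.subset (by rcases hx with rfl | rfl <;> simp [altList])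
  have hbS : b ∈ S.filter P := hsub.subset (by simp [altList])
  rw [List.mem_filter] at hxS hbS
  refine h b a hab.symm ?_
  rw [List.append_assoc, show altList (s + 4) b a = [b] ++ (altList (s + 2) a b ++ [x]) by
    rw [← he]; rfl]
  exact (singleton_sublist.2 (hP b hbS.1 hbS.2).1).append
    ((hsub.trans filter_sublist).append (singleton_sublist.2 (hP x hxS.1 hxS.2).2))

end IsDS

namespace Blocked

variable {m k : ℕ} {S T : List ℕ}

lemma nil (m : ℕ) : Blocked m [] := ⟨[], by simp, by simp, rfl⟩

lemma of_nodup (hS : S.Nodup) : Blocked 1 S := ⟨[S], by simp, by simpa, by simp⟩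

lemma mono (h : Blocked m S) (hmk : m ≤ k) : Blocked k S :=
  let ⟨Bs, hlen, hnd, hS⟩ := h
  ⟨Bs, hlen.trans hmk, hnd, hS⟩

lemma eq_nil (h : Blocked 0 S) : S = [] := by
  obtain ⟨Bs, hlen, -, rfl⟩ := h
  simp [List.length_eq_zero_iff.1 (Nat.le_zero.1 hlen)]

lemma nodup (h : Blocked 1 S) : S.Nodup := by
  obtain ⟨Bs, hlen, hnd, rfl⟩ := h
  match Bs, hlen with
  | [], _ => simp
  | [B], _ => simpa using hnd B (by simp)

lemma filter (h : Blocked m S) (P : ℕ → Bool) : Blocked m (S.filter P) := by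
  obtain ⟨Bs, hlen, hnd, rfl⟩ := h
  refine ⟨Bs.map (List.filter P), by simpa using hlen, ?_, List.filter_flatten⟩
  simp only [List.mem_map, forall_exists_index, and_imp, forall_apply_eq_imp_iff₂]
  exact fun B hB => (hnd B hB).filter P

lemma append (h : Blocked m S) (h' : Blocked k T) : Blocked (m + k) (S ++ T) := by
  obtain ⟨Bs, hlen, hnd, rfl⟩ := h
  obtain ⟨Cs, hlen', hnd', rfl⟩ := h'
  refine ⟨Bs ++ Cs, by simp; omega, ?_, by simp⟩
  simp only [List.mem_append]
  rintro B (hB | hB)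
  exacts [hnd B hB, hnd' B hB]

lemma exists_append (h : Blocked (m + k) S) :
    ∃ S₁ S₂, S = S₁ ++ S₂ ∧ Blocked m S₁ ∧ Blocked k S₂ := by
  obtain ⟨Bs, hlen, hnd, rfl⟩ := h
  refine ⟨(Bs.take m).flatten, (Bs.drop m).flatten, by rw [← flatten_append, take_append_drop],
    ⟨Bs.take m, by simp, fun B hB => hnd B (mem_of_mem_take hB), rfl⟩,
    ⟨Bs.drop m, by simp; omega, fun B hB => hnd B (mem_of_mem_drop hB), rfl⟩⟩

lemma exists_nodup_append (h : Blocked (m + 1) S) :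
    ∃ B T, S = B ++ T ∧ B.Nodup ∧ Blocked m T := by
  obtain ⟨B, T, rfl, hB, hT⟩ := exists_append (m := 1) (k := m) (by rwa [Nat.add_comm])
  exact ⟨B, T, rfl, nodup hB, hT⟩

lemma length_le_mul_card (h : Blocked m S) : S.length ≤ m * #S.toFinset := by
  induction m generalizing S with
  | zero => simp [eq_nil h]
  | succ m ih =>
    obtain ⟨B, T, rfl, hB, hT⟩ := exists_nodup_append h
    have hBc : #B.toFinset ≤ #(B ++ T).toFinset :=
      card_le_card (by rw [toFinset_append]; exact subset_union_left)
    have hTc : #T.toFinset ≤ #(B ++ T).toFinset :=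
      card_le_card (by rw [toFinset_append]; exact subset_union_right)
    have := ih hT
    rw [length_append, ← List.toFinset_card_of_nodup hB]
    nlinarith

end Blocked

lemma length_le_card_add_of_isDS_one {m : ℕ} {S : List ℕ} (h : IsDS 1 S) (hS : Blocked m S) :
    S.length ≤ #S.toFinset + m := by
  induction m generalizing S with
  | zero => simp [hS.eq_nil]
  | succ m ih =>
    obtain ⟨B, T, rfl, hB, hT⟩ := hS.exists_nodup_append
    have hTlen := ih (h.sublist_s11 (sublist_append_right B T)) hT
    -- two symbols `a b` of `B` that recur in `T` would give `a b a`
    have hshared : #(B.toFinset ∩ T.toFinset) ≤ 1 := by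
      refine card_le_one_of_forall_not_pair_sublist (l := B) (fun x hx => by simp_all) ?_
      intro a ha b _ hab hsub
      simp only [Finset.mem_inter, List.mem_toFinset] at ha
      exact h a b hab (hsub.append (singleton_sublist.2 ha.2))
    have hB_split := card_sdiff_add_card_inter B.toFinset T.toFinset
    have hunion := card_sdiff_add_card B.toFinset T.toFinset
    rw [length_append, ← List.toFinset_card_of_nodup hB, toFinset_append]
    omega

lemma length_le_card_sdiff_add_card_add_of_isDS_two {m : ℕ} {C S : List ℕ}
    (h : IsDS 2 (C ++ S)) (hS : Blocked m S) :
    S.length ≤ #(S.toFinset \ C.toFinset) + #S.toFinset + m := by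
  induction m generalizing C S with
  | zero => simp [hS.eq_nil]
  | succ m ih =>
    obtain ⟨B, T, rfl, hB, hT⟩ := hS.exists_nodup_append
    have hTlen := ih (C := C ++ B) (by rwa [List.append_assoc]) hT
    -- two symbols `a b` of `B` that occur in `C` and recur in `T` would give `b a b a`
    have hshared : #(B.toFinset ∩ C.toFinset ∩ T.toFinset) ≤ 1 := by
      refine card_le_one_of_forall_not_pair_sublist (l := B) (fun x hx => by simp_all) ?_
      intro a ha b hb hab hsub
      simp only [Finset.mem_inter, List.mem_toFinset] at ha hb
      refine h b a hab.symm ?_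
      rw [← List.append_assoc, show altList 4 b a = [b] ++ [a, b] ++ [a] from rfl]
      exact ((singleton_sublist.2 hb.1.2).append hsub).append (singleton_sublist.2 ha.2)
    have hB_split : #B.toFinset ≤ #(B.toFinset \ C.toFinset) + #(B.toFinset \ T.toFinset) + 1 := by
      calc #B.toFinset
          ≤ #((B.toFinset \ C.toFinset ∪ B.toFinset \ T.toFinset) ∪
              B.toFinset ∩ C.toFinset ∩ T.toFinset) := by
            refine card_le_card fun x hx => ?_
            simp only [Finset.mem_union, Finset.mem_sdiff, Finset.mem_inter]
            tauto
        _ ≤ #(B.toFinset \ C.toFinset ∪ B.toFinset \ T.toFinset) + 1 :=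
            (card_union_le _ _).trans (by omega)
        _ ≤ _ := by grw [card_union_le]
    have hnew : #(B.toFinset \ C.toFinset) + #(T.toFinset \ (C ++ B).toFinset) ≤
        #((B ++ T).toFinset \ C.toFinset) := by
      refine card_add_card_le_of_disjoint ?_ ?_ ?_ <;>
        simp [Finset.disjoint_left, Finset.subset_iff] <;> tauto
    have hlast : #(B.toFinset \ T.toFinset) + #T.toFinset ≤ #(B ++ T).toFinset := by
      rw [card_sdiff_add_card, toFinset_append]
    rw [length_append, ← List.toFinset_card_of_nodup hB]
    omega

lemma length_le_two_mul_card_add_of_isDS_two {m : ℕ} {S : List ℕ} (h : IsDS 2 S)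
    (hS : Blocked m S) : S.length ≤ 2 * #S.toFinset + m := by
  have := length_le_card_sdiff_add_card_add_of_isDS_two (C := []) (by simpa using h) hS
  simp only [List.toFinset_nil, sdiff_empty] at this
  omega

/-- `λ₃(n, m) ≤ p n + q (m - 1)` for every `m ≤ M`. -/
def DS3LengthBound (M p q : ℕ) : Prop :=
  ∀ m ≤ M, ∀ S : List ℕ, IsDS 3 S → Blocked m S → S.length ≤ p * #S.toFinset + q * (m - 1)

lemma DS3LengthBound.mono {M M' p p' q q' : ℕ} (h : DS3LengthBound M p q) (hM : M' ≤ M)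
    (hp : p ≤ p') (hq : q ≤ q') : DS3LengthBound M' p' q' := by
  intro m hm S hS hB
  grw [h m (hm.trans hM) S hS hB, hp, hq]

lemma length_append_le_of_isDS_three {S₁ S₂ : List ℕ} {K k₁ k₂ q : ℕ} (h : IsDS 3 (S₁ ++ S₂))
    (hB₁ : Blocked k₁ S₁) (hB₂ : Blocked k₂ S₂) (hk₁ : k₁ ≤ K) (hk₂ : k₂ ≤ K)
    (hK : DS3LengthBound K 4 q) :
    (S₁ ++ S₂).length ≤ 4 * #(S₁ ++ S₂).toFinset + q * (k₁ - 1) + q * (k₂ - 1) + k₁ + k₂ := by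
  have hOnly₁ := hK k₁ hk₁ _ (h.sublist_s11 (filter_sublist.trans (sublist_append_left S₁ S₂)))
    (hB₁.filter fun x => !decide (x ∈ S₂))
  have hOnly₂ := hK k₂ hk₂ _ (h.sublist_s11 (filter_sublist.trans (sublist_append_right S₁ S₂)))
    (hB₂.filter fun x => !decide (x ∈ S₁))
  have hShared₁ := length_le_two_mul_card_add_of_isDS_two
    (h.filter_of_append_right (P := fun x => decide (x ∈ S₂)) (by simp)) (hB₁.filter _)
  have hShared₂ := length_le_two_mul_card_add_of_isDS_two
    (h.filter_of_append_left (P := fun x => decide (x ∈ S₁)) (by simp)) (hB₂.filter _)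
  have hCard₁ := card_filter_add_card_filter_not (s := S₁.toFinset) (· ∈ S₂)
  have hCard₂ : #S₁.toFinset + #(S₂.filter fun x => !decide (x ∈ S₁)).toFinset ≤
      #(S₁ ++ S₂).toFinset := by
    refine card_add_card_le_of_disjoint ?_ ?_ ?_ <;>
      simp [Finset.disjoint_left, Finset.subset_iff] <;> tauto
  have hCard₃ : #(S₂.filter fun x => decide (x ∈ S₁)).toFinset ≤
      #(S₁.filter fun x => decide (x ∈ S₂)).toFinset :=
    card_le_card (by simp [Finset.subset_iff]; tauto)
  simp only [List.toFinset_filter, Bool.not_eq_true', decide_eq_false_iff_not,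
    decide_eq_true_eq] at *
  rw [length_append, length_eq_length_filter_add (l := S₁) (· ∈ S₂),
    length_eq_length_filter_add (l := S₂) (· ∈ S₁)]
  omega

lemma ds3LengthBound_two_pow (t : ℕ) : DS3LengthBound (2 ^ t) 4 t := by
  induction t with
  | zero => exact fun m hm S _ hB => by grw [hB.length_le_mul_card, hm]; omega
  | succ t ih =>
    intro m hm S hS hB
    by_cases hm2 : m ≤ 2
    · grw [hB.length_le_mul_card, hm2]; omega
    by_cases hmt : m ≤ 2 ^ t
    · exact (ih.mono hmt le_rfl (Nat.le_succ t)) m le_rfl S hS hB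
    have ht : 1 ≤ t := Nat.pos_of_ne_zero fun ht => by simp [ht] at hm; omega
    rw [pow_succ] at hm
    obtain ⟨S₁, S₂, rfl, hB₁, hB₂⟩ :=
      (hB.mono (show m ≤ 2 ^ t + (m - 2 ^ t) by omega)).exists_append
    have hlen := length_append_le_of_isDS_three hS hB₁ hB₂ le_rfl (by omega) ih
    have hblocks : t * (2 ^ t - 1) + t * (m - 2 ^ t - 1) + 2 ^ t + (m - 2 ^ t) ≤
        (t + 1) * (m - 1) := by
      obtain ⟨P, hP⟩ := Nat.exists_eq_add_of_le' t.one_le_two_pow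
      obtain ⟨k, rfl⟩ := Nat.exists_eq_add_of_lt (hP ▸ not_le.1 hmt)
      rw [hP, show P + 1 + k + 1 - (P + 1) = k + 1 by omega]
      simp only [Nat.add_sub_cancel]
      nlinarith
    omega

/-- The block that replaces the interval `S` of `Pre ++ S ++ Post` in the contracted sequence. -/
def contractedBlock (Pre S Post : List ℕ) : List ℕ :=
  (S.filter fun x => x ∈ Pre ∨ x ∈ Post).dedup

section contractedBlock

variable {Pre S Post : List ℕ}

lemma nodup_contractedBlock : (contractedBlock Pre S Post).Nodup := nodup_dedup _

lemma contractedBlock_sublist : contractedBlock Pre S Post <+ S :=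
  (dedup_sublist _).trans filter_sublist

@[simp]
lemma mem_contractedBlock {x : ℕ} :
    x ∈ contractedBlock Pre S Post ↔ x ∈ S ∧ (x ∈ Pre ∨ x ∈ Post) := by
  simp [contractedBlock]

lemma toFinset_contractedBlock :
    (contractedBlock Pre S Post).toFinset = (S.filter fun x => x ∈ Pre ∨ x ∈ Post).toFinset := by
  ext x
  simp [contractedBlock]

lemma length_le_of_isDS_three_append_append {k W p q : ℕ} (h : IsDS 3 (Pre ++ S ++ Post))
    (hS : Blocked k S) (hkW : k ≤ W) (hW : DS3LengthBound W p q) :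
    S.length ≤ p * #(S.toFinset \ (contractedBlock Pre S Post).toFinset) +
      #((contractedBlock Pre S Post).toFinset \ Pre.toFinset) +
      #((contractedBlock Pre S Post).toFinset \ Post.toFinset) +
      (contractedBlock Pre S Post).length + q * (k - 1) + 3 * k := by
  set g : ℕ → Bool := fun x => x ∈ Pre ∨ x ∈ Post
  set G := (contractedBlock Pre S Post).toFinset
  have hG : G = (S.filter g).toFinset := toFinset_contractedBlock
  set L := S.filter g
  set A := L.filter (· ∈ Pre)
  have hL : L <+ S := filter_sublist
  have hLoc := hW k hkW _ (h.sublist_s11 (filter_sublist.trans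
    ((sublist_append_right Pre S).trans (sublist_append_left _ Post)))) (hS.filter fun x => !g x)
  have hStart := length_le_two_mul_card_add_of_isDS_two
    (IsDS.filter_of_append_right (T := Post) (P := fun x => x ∉ Pre)
      (h.sublist_s11 ((hL.trans (sublist_append_right Pre S)).append_right Post))
      (by simp [L, g]; tauto)) ((hS.filter g).filter _)
  have hEnd := length_le_two_mul_card_add_of_isDS_two
    ((IsDS.filter_of_append_left (T := Pre) (P := (· ∈ Pre))
      (h.sublist_s11 ((hL.append_left Pre).trans (sublist_append_left _ Post))) (by simp))
      |>.sublist (filter_sublist (p := fun x => x ∉ Post))) (((hS.filter g).filter _).filter _)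
  have hMiddle := length_le_card_add_of_isDS_one
    (IsDS.filter_of_append_append (T := Pre) (U := Post) (S := A) (P := (· ∈ Post))
      (h.sublist_s11 ((((filter_sublist.trans hL).append_left Pre)).append_right Post))
      (by simp [A]; tauto)) (((hS.filter g).filter _).filter (· ∈ Post))
  have hLocCard : #(S.filter fun x => !g x).toFinset ≤ #(S.toFinset \ G) :=
    card_le_card fun x => by simp [hG, L, g]; tauto
  have hStCard : #(L.filter fun x => x ∉ Pre).toFinset ≤ #(G \ Pre.toFinset) :=
    card_le_card fun x => by simp [hG]
  have hEnCard : #(A.filter fun x => x ∉ Post).toFinset ≤ #(G \ Post.toFinset) :=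
    card_le_card fun x => by simp [hG, A]; tauto
  have hGCard : #G = #(L.filter fun x => x ∉ Pre).toFinset +
      #(A.filter fun x => x ∉ Post).toFinset + #(A.filter (· ∈ Post)).toFinset := by
    rw [hG, ← card_filter_add_card_filter_not (s := L.toFinset) (· ∈ Pre),
      ← card_filter_add_card_filter_not (s := L.toFinset.filter (· ∈ Pre)) (· ∈ Post)]
    simp only [A, List.toFinset_filter, decide_eq_true_eq, Finset.filter_filter]
    omega
  have hLen : (contractedBlock Pre S Post).length = #G :=
    (List.toFinset_card_of_nodup nodup_contractedBlock).symm
  have hLocMul := Nat.mul_le_mul_left p hLocCard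
  rw [hLen, length_eq_length_filter_add (l := S) g, length_eq_length_filter_add (l := L) (· ∈ Pre),
    length_eq_length_filter_add (l := A) (· ∈ Post)]
  simp only [decide_not, A] at *
  omega

end contractedBlock

/-- `G` contracts each interval of `W` consecutive blocks of `S` to its `contractedBlock`. The
symbols missing from `G` are local to one interval; each other symbol is paid for once where it
starts (if not already in `Pre`) and once where it ends. -/
lemma exists_contraction {W p q : ℕ} (hW1 : 1 ≤ W) (hW : DS3LengthBound W p q) (m : ℕ)
    (Pre S : List ℕ) (h : IsDS 3 (Pre ++ S)) (hS : Blocked m S) :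
    ∃ m' G, m' ≤ m ∧ m ≤ m' * W ∧ m' * W < m + W ∧ Blocked m' G ∧ G <+ S ∧
      (∀ x ∈ S, x ∈ Pre → x ∈ G) ∧
      S.length ≤ p * #(S.toFinset \ G.toFinset) + #(G.toFinset \ Pre.toFinset) + #G.toFinset +
        G.length + q * (m - m') + 3 * m := by
  induction m using Nat.strong_induction_on generalizing Pre S with
  | _ m ih =>
    rcases Nat.eq_zero_or_pos m with rfl | hm
    · obtain rfl := hS.eq_nil
      exact ⟨0, [], by simp [Blocked.nil]; omega⟩
    obtain ⟨S₁, S₂, rfl, hS₁, hS₂⟩ :=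
      (hS.mono (show m ≤ min W m + (m - W) by omega)).exists_append
    obtain ⟨m₂, G₂, hm₂, hm₂W, hm₂W', hG₂, hG₂S, hG₂Pre, hlen₂⟩ :=
      ih (m - W) (by omega) (Pre ++ S₁) S₂ (by rwa [List.append_assoc]) hS₂
    have hlen₁ := length_le_of_isDS_three_append_append (Post := S₂)
      (by rwa [List.append_assoc]) hS₁ (min_le_left W m) hW
    set C := contractedBlock Pre S₁ S₂
    have hm₂0 : m < W → m₂ = 0 := fun hmW => by omega
    refine ⟨m₂ + 1, C ++ G₂, by omega, ?_, ?_, ?_, contractedBlock_sublist.append hG₂S, ?_, ?_⟩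
    · rw [Nat.succ_mul]; omega
    · by_cases hmW : m < W
      · simp [hm₂0 hmW]; omega
      · rw [Nat.succ_mul]; omega
    · rw [Nat.add_comm]
      exact (Blocked.of_nodup nodup_contractedBlock).append hG₂
    · intro x hx hxPre
      rcases List.mem_append.1 hx with hx | hx
      · exact List.mem_append_left _ (mem_contractedBlock.2 ⟨hx, Or.inl hxPre⟩)
      · exact List.mem_append_right _ (hG₂Pre x hx (List.mem_append_left _ hxPre))
    have hG₂S' : ∀ x ∈ G₂, x ∈ S₂ := fun x hx => hG₂S.subset hx
    have hLocal : #(S₁.toFinset \ C.toFinset) + #(S₂.toFinset \ G₂.toFinset) ≤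
        #((S₁ ++ S₂).toFinset \ (C ++ G₂).toFinset) := by
      refine card_add_card_le_of_disjoint ?_ ?_ ?_ <;>
        simp [Finset.disjoint_left, Finset.subset_iff, C] <;> grind
    have hStart : #(C.toFinset \ Pre.toFinset) + #(G₂.toFinset \ (Pre ++ S₁).toFinset) ≤
        #((C ++ G₂).toFinset \ Pre.toFinset) := by
      refine card_add_card_le_of_disjoint ?_ ?_ ?_ <;>
        simp [Finset.disjoint_left, Finset.subset_iff, C] <;> grind
    have hEnd : #(C.toFinset \ S₂.toFinset) + #G₂.toFinset ≤ #(C ++ G₂).toFinset := by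
      refine card_add_card_le_of_disjoint ?_ ?_ ?_ <;>
        simp [Finset.disjoint_left, Finset.subset_iff, C] <;> grind
    have hq : q * (min W m - 1) + q * (m - W - m₂) = q * (m - (m₂ + 1)) := by
      rw [← Nat.mul_add]; congr 1; omega
    have hp := Nat.mul_le_mul_left p hLocal
    rw [Nat.mul_add] at hp
    rw [length_append, length_append]
    omega

lemma DS3LengthBound.comp {W M p q r s : ℕ} (h₁ : DS3LengthBound W p q)
    (h₂ : DS3LengthBound M r (s * W)) (hrp : r + 2 ≤ p) (hq : 3 ≤ q) :
    DS3LengthBound (W * M) p (q + s + 3) := by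
  intro m hm S hS hB
  by_cases hmW : m ≤ W
  · exact (h₁.mono le_rfl le_rfl (by omega)) m hmW S hS hB
  have hW1 : 1 ≤ W := Nat.pos_of_ne_zero fun hW => by simp [hW] at hm; omega
  obtain ⟨m', G, -, hm'W, hm'W', hG, hGS, -, hlen⟩ :=
    exists_contraction hW1 h₁ m [] S (by simpa) hB
  have hm'M : m' ≤ M := Nat.le_of_lt_succ <| Nat.lt_of_mul_lt_mul_right (a := W) <| by
    rw [Nat.succ_mul, Nat.mul_comm M W]; omega
  have hm'2 : 2 ≤ m' := by
    by_contra!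
    have : m' * W ≤ 1 * W := Nat.mul_le_mul_right W (by omega)
    omega
  -- each interval but the last has exactly `W` blocks
  have hintervals : (m' - 1) * W ≤ m - 1 := by
    have : (m' - 1) * W + W = m' * W := by rw [← Nat.succ_mul]; congr 1; omega
    omega
  have hGlen := h₂ m' hm'M G (hS.sublist_s11 hGS) hG
  have hGS' : G.toFinset ⊆ S.toFinset := fun x => by simpa using fun hx => hGS.subset hx
  have hcard : #(S.toFinset \ G.toFinset) + #G.toFinset = #S.toFinset := by
    rw [card_sdiff_add_card, union_eq_left.2 hGS']
  have hGlobal : (r + 2) * #G.toFinset ≤ p * #G.toFinset := Nat.mul_le_mul_right _ hrp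
  have hContracted : s * W * (m' - 1) ≤ s * (m - 1) := by
    rw [Nat.mul_assoc, Nat.mul_comm W]; exact Nat.mul_le_mul_left s hintervals
  have hLocal : q * (m - m') + q ≤ q * (m - 1) := by
    rw [← Nat.mul_succ]; exact Nat.mul_le_mul_left q (by omega)
  have hSymbols : p * #(S.toFinset \ G.toFinset) + p * #G.toFinset = p * #S.toFinset := by
    rw [← Nat.mul_add, hcard]
  simp only [List.toFinset_nil, sdiff_empty] at hlen
  rw [Nat.add_mul] at hGlobal
  rw [Nat.add_mul, Nat.add_mul]
  omega

lemma ackDS_one (j : ℕ) : ackDS 1 j = 2 ^ j := by rw [ackDS]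

lemma ackDS_succ_one {i : ℕ} (hi : 1 ≤ i) : ackDS (i + 1) 1 = 2 := by
  obtain ⟨i, rfl⟩ : ∃ i', i = i' + 1 := ⟨i - 1, by omega⟩
  rw [ackDS]

lemma ackDS_succ_succ {i j : ℕ} (hi : 1 ≤ i) (hj : 1 ≤ j) :
    ackDS (i + 1) (j + 1) = ackDS (i + 1) j * ackDS i (ackDS (i + 1) j) := by
  obtain ⟨i, rfl⟩ : ∃ i', i = i' + 1 := ⟨i - 1, by omega⟩
  obtain ⟨j, rfl⟩ : ∃ j', j = j' + 1 := ⟨j - 1, by omega⟩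
  rw [ackDS]

lemma ackDS_pos {i j : ℕ} (hi : 1 ≤ i) (hj : 1 ≤ j) : 0 < ackDS i j := by
  induction i, hi using Nat.le_induction generalizing j with
  | base => rw [ackDS_one]; positivity
  | succ i hi ih =>
    induction j, hj using Nat.le_induction with
    | base => rw [ackDS_succ_one hi]; positivity
    | succ j hj ihj => rw [ackDS_succ_succ hi hj]; exact Nat.mul_pos ihj (ih ihj)

lemma ds3LengthBound_ackDS {c i j : ℕ} (hc : 1 ≤ c) (hi : 1 ≤ i) (hj : 1 ≤ j) :
    DS3LengthBound (ackDS i j ^ c) (2 * i + 2) ((3 * i - 2) * c * j) := by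
  induction i, hi using Nat.le_induction generalizing j with
  | base =>
    rw [ackDS_one, ← pow_mul]
    exact (ds3LengthBound_two_pow (j * c)).mono le_rfl le_rfl (by rw [Nat.mul_comm j]; simp)
  | succ i hi ih =>
    obtain ⟨a, ha, ha'⟩ : ∃ a, 3 * i - 2 = a ∧ 3 * (i + 1) - 2 = a + 3 := ⟨3 * i - 2, rfl, by omega⟩
    rw [ha] at ih
    rw [ha']
    induction j, hj using Nat.le_induction with
    | base =>
      rw [ackDS_succ_one hi]
      exact (ds3LengthBound_two_pow c).mono le_rfl (by omega) (by nlinarith)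
    | succ j hj ihj =>
      rw [ackDS_succ_succ hi hj, mul_pow]
      set w := ackDS (i + 1) j
      have h₂ : DS3LengthBound (ackDS i w ^ c) (2 * i + 2) (a * c * w ^ c) :=
        (ih (ackDS_pos (i := i + 1) (by omega) hj)).mono le_rfl le_rfl
          (Nat.mul_le_mul_left _ (Nat.le_self_pow (by omega) w))
      refine (ihj.comp h₂ (by omega) ?_).mono le_rfl le_rfl (by nlinarith)
      exact le_trans (by omega : 3 ≤ (a + 3) * 1 * 1) (by gcongr)

theorem stmt11_general (c i j n m : ℕ) (hc : 1 ≤ c) (hi : 1 ≤ i) (hj : 1 ≤ j)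
    (hm2 : m ≤ ackDS i j ^ c) :
    lamB 3 n m ≤ (2 * i + 2) * n + (3 * i - 2) * c * j * (m - 1) := by
  refine csSup_le ⟨0, [], fun a b _ h => by simp [altList] at h, by simp, Blocked.nil m, rfl⟩ ?_
  rintro _ ⟨S, hS, hn, hB, rfl⟩
  grw [ds3LengthBound_ackDS hc hi hj m hm2 S hS hB, hn]

/-- For every `c, i, j, n ≥ 1` and `1 ≤ m ≤ (a_{i,j})^c`:
`λ₃(n,m) ≤ (2i+2)·n + (3i−2)·c·j·(m−1)`. -/
theorem stmt11 (c i j n m : ℕ) (hc : 1 ≤ c) (hi : 1 ≤ i) (hj : 1 ≤ j)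
    (hn : 1 ≤ n) (hm1 : 1 ≤ m) (hm2 : m ≤ ackDS i j ^ c) :
    lamB 3 n m ≤ (2 * i + 2) * n + (3 * i - 2) * c * j * (m - 1) :=
  stmt11_general c i j n m hc hi hj hm2
end
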